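/- Let Σ consist of a unary symbol C and a constant a, let R be the TRS with the single rule C(a) → a, and let C^ω denote the unique term satisfying C^ω = C(C^ω). Then C^ω ∞→ a holds, but ¬(C^ω →∞ a); moreover ¬(C^ω ((→∞)⁻¹ ∪ →∞)* a). Hence the inclusions →∞ ⊆ ∞→ and ((→∞)⁻¹ ∪ →∞)* ⊆ ((∞→)⁻¹ ∪ ∞→)* are strict for this TRS. -/

import Mathlib

open Relation

/-- A signature: a type of function symbols together with an arity for each symbol. -/
structure Signature where
  Sym : Type
  ar : Sym → ℕ

/-- The polynomial functor whose final coalgebra is the set of (finite and infinite)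
terms over the signature `Sg` and the set `X` of variables. -/
def TermF (Sg : Signature) (X : Type) : PFunctor.{0} :=
  ⟨X ⊕ Sg.Sym, fun a => Sum.rec (fun _ => Empty) (fun f => Fin (Sg.ar f)) a⟩

/-- The set `T` of finite and infinite terms over `Sg` and `X`, defined coinductively
(as the final coalgebra, i.e. the M-type, of `TermF Sg X`). -/
def Tm (Sg : Signature) (X : Type) : Type := PFunctor.M (TermF Sg X)

variable {Sg : Signature} {X : Type}

/-- The term consisting of a single variable. -/
def Tm.var (x : X) : Tm Sg X := PFunctor.M.mk ⟨Sum.inl x, Empty.elim⟩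

/-- The term `f(t₁,…,tₙ)` with root symbol `f` and arguments `args`. -/
def Tm.node (f : Sg.Sym) (args : Fin (Sg.ar f) → Tm Sg X) : Tm Sg X :=
  PFunctor.M.mk ⟨Sum.inr f, args⟩

/-- One step of the corecursive definition of substitution:
`Sum.inl t` means `t` still has to be substituted, `Sum.inr t` means `t` is copied. -/
def substAux (σ : X → Tm Sg X) :
    (Tm Sg X ⊕ Tm Sg X) → (TermF Sg X) (Tm Sg X ⊕ Tm Sg X) := fun s =>
  match s with
  | Sum.inl t =>
    match PFunctor.M.dest t with
    | ⟨Sum.inl x, _⟩ =>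
        ⟨(PFunctor.M.dest (σ x)).1, fun b => Sum.inr ((PFunctor.M.dest (σ x)).2 b)⟩
    | ⟨Sum.inr f, k⟩ => ⟨Sum.inr f, fun b => Sum.inl (k b)⟩
  | Sum.inr t =>
      ⟨(PFunctor.M.dest t).1, fun b => Sum.inr ((PFunctor.M.dest t).2 b)⟩

/-- Application `tσ` of a substitution `σ : X → T` to a term `t`, defined corecursively. -/
def subst (σ : X → Tm Sg X) (t : Tm Sg X) : Tm Sg X :=
  PFunctor.M.corec (substAux σ) (Sum.inl t)

/-- `Occurs x t`: the variable `x` occurs in the term `t`. -/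
inductive Occurs (x : X) : Tm Sg X → Prop
  | here {t : Tm Sg X} : t = Tm.var x → Occurs x t
  | deeper {t : Tm Sg X} {f : Sg.Sym} {args : Fin (Sg.ar f) → Tm Sg X}
      (i : Fin (Sg.ar f)) : t = Tm.node f args → Occurs x (args i) → Occurs x t

/-- A term rewriting system over `Sg` and `X`: a set of rules `ℓ → r` such that
`ℓ` is not a variable and all variables of `r` occur in `ℓ`. -/
structure TRS (Sg : Signature) (X : Type) where
  rules : Set (Tm Sg X × Tm Sg X)
  lhs_not_var : ∀ l r, (l, r) ∈ rules → ∀ x : X, l ≠ Tm.var x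
  vars_lhs : ∀ l r, (l, r) ∈ rules → ∀ x : X, Occurs x r → Occurs x l

/-- Relations on terms. -/
abbrev TRel (Sg : Signature) (X : Type) := Tm Sg X → Tm Sg X → Prop

/-- The root step relation `→ε := {(ℓσ, rσ) | ℓ → r ∈ R, σ a substitution}`. -/
def RootStep (R : TRS Sg X) : TRel Sg X := fun s t =>
  ∃ l r, (l, r) ∈ R.rules ∧ ∃ σ : X → Tm Sg X, s = subst σ l ∧ t = subst σ r

/-- `StepAt Q p s t`: a `Q`-step at position `p`, i.e. `s = C[u]`, `t = C[v]` with
`(u,v) ∈ Q` and `C` a one-hole context whose hole is at position `p`. -/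
inductive StepAt (Q : TRel Sg X) : List ℕ → Tm Sg X → Tm Sg X → Prop
  | here {s t : Tm Sg X} : Q s t → StepAt Q [] s t
  | deeper {f : Sg.Sym} {ss ts : Fin (Sg.ar f) → Tm Sg X} (i : Fin (Sg.ar f))
      {p : List ℕ} : StepAt Q p (ss i) (ts i) → (∀ j, j ≠ i → ss j = ts j) →
      StepAt Q ((i : ℕ) :: p) (Tm.node f ss) (Tm.node f ts)

/-- The one-step rewrite relation `→` of a TRS: a root step applied inside a
one-hole context. -/
def Step (R : TRS Sg X) : TRel Sg X := fun s t => ∃ p, StepAt (RootStep R) p s t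

/-- The lifting `↓R` of a relation `R`:
`↓R := {(f(s₁,…,sₙ), f(t₁,…,tₙ)) | f ∈ Σ, s₁ R t₁, …, sₙ R tₙ} ∪ Id`. -/
def liftRel (R : TRel Sg X) : TRel Sg X := fun s t =>
  s = t ∨ ∃ (f : Sg.Sym) (ss ts : Fin (Sg.ar f) → Tm Sg X),
    s = Tm.node f ss ∧ t = Tm.node f ts ∧ ∀ i, R (ss i) (ts i)

lemma liftRel_mono : Monotone (liftRel (Sg := Sg) (X := X)) := by
  intro R S h s t hst
  rcases hst with h1 | ⟨f, ss, ts, rfl, rfl, hi⟩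
  · exact Or.inl h1
  · exact Or.inr ⟨f, ss, ts, rfl, rfl, fun i => h _ _ (hi i)⟩

/-- Relational composition `r ∘ s`. -/
def relComp (r s : TRel Sg X) : TRel Sg X := fun a c => ∃ b, r a b ∧ s b c

/-- The monotone operator `S ↦ (→ε ∪ ↓R)* ∘ ↓S` (for a fixed `R`). -/
def iredInnerHom (R : TRS Sg X) (U : TRel Sg X) : TRel Sg X →o TRel Sg X where
  toFun S := relComp
    (ReflTransGen (fun s t => RootStep R s t ∨ liftRel U s t)) (liftRel S)
  monotone' := by
    intro S S' h a c hac
    rcases hac with ⟨b, h1, h2⟩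
    exact ⟨b, h1, liftRel_mono h _ _ h2⟩

/-- The monotone operator `R ↦ νS.((→ε ∪ ↓R)* ∘ ↓S)`. -/
def iredHom (R : TRS Sg X) : TRel Sg X →o TRel Sg X where
  toFun U := OrderHom.gfp (iredInnerHom R U)
  monotone' := by
    intro U V h
    apply OrderHom.gfp.monotone
    intro S a c hac
    rcases hac with ⟨b, h1, h2⟩
    refine ⟨b, ?_, h2⟩
    exact ReflTransGen.mono (fun x y hxy => hxy.imp id (fun h' => liftRel_mono h _ _ h')) _ _ h1

/-- The infinitary rewrite relation `→∞ := μR.νS.((→ε ∪ ↓R)* ∘ ↓S)`. -/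
def ired (R : TRS Sg X) : TRel Sg X := OrderHom.lfp (iredHom R)

/-- The monotone operator `R' ↦ (→ε ∪ ↓R')*`. -/
def biHom (R : TRS Sg X) : TRel Sg X →o TRel Sg X where
  toFun U := ReflTransGen (fun s t => RootStep R s t ∨ liftRel U s t)
  monotone' := by
    intro U V h a b hab
    exact ReflTransGen.mono (fun x y hxy => hxy.imp id (fun h' => liftRel_mono h _ _ h')) _ _ hab

/-- The bi-infinite rewrite relation `∞→ := νR.(→ε ∪ ↓R)*`. -/
def bired (R : TRS Sg X) : TRel Sg X := OrderHom.gfp (biHom R)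

/-- The monotone operator `R' ↦ (←ε ∪ →ε ∪ ↓R')*`. -/
def ieqHom (R : TRS Sg X) : TRel Sg X →o TRel Sg X where
  toFun U := ReflTransGen (fun s t => RootStep R t s ∨ RootStep R s t ∨ liftRel U s t)
  monotone' := by
    intro U V h a b hab
    exact ReflTransGen.mono
      (fun x y hxy => hxy.imp id (fun h' => h'.imp id (fun h'' => liftRel_mono h _ _ h''))) _ _ hab

/-- The infinitary equational reasoning relation `=∞ := νR.(←ε ∪ →ε ∪ ↓R)*`. -/
def ieq (R : TRS Sg X) : TRel Sg X := OrderHom.gfp (ieqHom R)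

/-- `Agree n s t`: the terms `s` and `t` coincide up to depth `n`
(i.e. `d(s,t) ≤ 2^{-n}` for the standard metric `d`). -/
def Agree : ℕ → Tm Sg X → Tm Sg X → Prop
  | 0, _, _ => True
  | n + 1, s, t =>
      (∃ x : X, s = Tm.var x ∧ t = Tm.var x) ∨
      ∃ (f : Sg.Sym) (ss ts : Fin (Sg.ar f) → Tm Sg X),
        s = Tm.node f ss ∧ t = Tm.node f ts ∧ ∀ i, Agree n (ss i) (ts i)

/-- `ConvTo t p l tl`: as `β` approaches the ordinal `l` from below,
`d(t β, tl)` tends to `0` and the depth `|p β|` tends to infinity. -/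
def ConvTo (t : Ordinal.{0} → Tm Sg X) (p : Ordinal.{0} → List ℕ) (l : Ordinal.{0})
    (tl : Tm Sg X) : Prop :=
  (∀ n : ℕ, ∃ β₀ < l, ∀ β, β₀ ≤ β → β < l → Agree n (t β) tl) ∧
  (∀ n : ℕ, ∃ β₀ < l, ∀ β, β₀ ≤ β → β < l → n ≤ (p β).length)

/-- A transfinite sequence of `Q`-steps `(t_β →_{p_β} t_{β+1})_{β<α}` of ordinal
length `α`, weakly continuous and with depths tending to infinity at every limit
ordinal `λ < α`. -/
structure TransSeq (Q : TRel Sg X) (α : Ordinal.{0}) where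
  t : Ordinal.{0} → Tm Sg X
  pos : Ordinal.{0} → List ℕ
  step : ∀ β < α, StepAt Q (pos β) (t β) (t (β + 1))
  conv : ∀ l < α, Order.IsSuccLimit l → ConvTo t pos l (t l)

/-- A transfinite rewrite sequence is strongly convergent if its length is a successor
ordinal (or zero), or there exists a final term to which it converges (with depths
tending to infinity) at the limit. -/
def TransSeq.StronglyConvergent {Q : TRel Sg X} {α : Ordinal.{0}} (s : TransSeq Q α) : Prop :=
  Order.IsSuccLimit α → ∃ tl, ConvTo s.t s.pos α tl

/-- `SCRed Q s t`: there is a strongly convergent transfinite sequence of `Q`-steps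
from `s` to `t`. -/
def SCRed (Q : TRel Sg X) : TRel Sg X := fun a b =>
  ∃ (α : Ordinal.{0}) (s : TransSeq Q α), s.t 0 = a ∧ s.t α = b ∧
    (Order.IsSuccLimit α → ConvTo s.t s.pos α b)

/-- The standard, ordinal-based infinitary rewrite relation `→∞_ord`:
strongly convergent transfinite rewrite sequences. -/
def iredOrd (R : TRS Sg X) : TRel Sg X := SCRed (RootStep R)

-- auxiliary facts about the term constructors
lemma node_ne_var (f : Sg.Sym) (args : Fin (Sg.ar f) → Tm Sg X) (x : X) :
    Tm.node f args ≠ Tm.var x := by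
  intro h
  have h1 := congrArg (fun u => (PFunctor.M.dest u).1) h
  simp only [Tm.node, Tm.var, PFunctor.M.dest_mk] at h1
  exact nomatch (h1 : (Sum.inr f : X ⊕ Sg.Sym) = Sum.inl x)

lemma node_inj_sym {f g : Sg.Sym} {ss : Fin (Sg.ar f) → Tm Sg X}
    {ts : Fin (Sg.ar g) → Tm Sg X} (h : Tm.node f ss = Tm.node g ts) : f = g := by
  have h1 := congrArg (fun u => (PFunctor.M.dest u).1) h
  simp only [Tm.node, PFunctor.M.dest_mk] at h1
  exact Sum.inr.inj h1

lemma node_inj_args {f : Sg.Sym} {ss ts : Fin (Sg.ar f) → Tm Sg X}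
    (h : Tm.node f ss = Tm.node f ts) : ss = ts := by
  have h' : (PFunctor.M.mk ⟨Sum.inr f, ss⟩ : Tm Sg X) = PFunctor.M.mk ⟨Sum.inr f, ts⟩ := h
  have h1 := PFunctor.M.mk_inj h'
  injection h1 with h2 h3

lemma var_inj {x y : X} (h : (Tm.var x : Tm Sg X) = Tm.var y) : x = y := by
  have h1 := congrArg (fun u => (PFunctor.M.dest u).1) h
  simp only [Tm.var, PFunctor.M.dest_mk] at h1
  exact Sum.inl.inj h1

lemma occurs_var_iff {x y : X} : Occurs x (Tm.var y : Tm Sg X) ↔ x = y := by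
  constructor
  · intro h
    cases h with
    | here h => exact (var_inj h.symm)
    | deeper i h _ => exact absurd h.symm (node_ne_var _ _ _)
  · rintro rfl
    exact Occurs.here rfl

lemma occurs_node_iff {x : X} {f : Sg.Sym} {args : Fin (Sg.ar f) → Tm Sg X} :
    Occurs x (Tm.node f args) ↔ ∃ i, Occurs x (args i) := by
  constructor
  · intro h
    cases h with
    | here h => exact absurd h (node_ne_var _ _ _)
    | deeper i h hocc =>
      obtain rfl := node_inj_sym h
      obtain rfl := node_inj_args h
      exact ⟨i, hocc⟩
  · rintro ⟨i, h⟩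
    exact Occurs.deeper i rfl h

/-! ### The TRS with the single rule `C(a) → a` -/

inductive SymCA : Type
  | C : SymCA
  | a : SymCA

/-- The signature with a unary symbol `C` and a constant `a`. -/
def SgCA : Signature := ⟨SymCA, fun s => match s with | .C => 1 | .a => 0⟩

/-- The constant `a`. -/
def tmA : Tm SgCA ℕ := Tm.node SymCA.a Fin.elim0

/-- `C(u)`. -/
def tmC (u : Tm SgCA ℕ) : Tm SgCA ℕ := Tm.node SymCA.C (fun _ => u)

/-- The TRS with the single rule `C(a) → a`. -/
def RCA : TRS SgCA ℕ where
  rules := {(tmC tmA, tmA)}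
  lhs_not_var := by
    rintro l r hm x
    simp only [Set.mem_singleton_iff, Prod.mk.injEq] at hm
    obtain ⟨rfl, rfl⟩ := hm
    exact node_ne_var _ _ _
  vars_lhs := by
    rintro l r hm x h
    simp only [Set.mem_singleton_iff, Prod.mk.injEq] at hm
    obtain ⟨rfl, rfl⟩ := hm
    exact Occurs.deeper (⟨0, by decide⟩ : Fin (SgCA.ar SymCA.C)) rfl h

/-!
`C^ω ∞→ a` is witnessed coinductively by the relation `{(C^ω, a)}`, since
`C^ω = C(C^ω) ↓ C(a) →ε a`. In `→∞` the outer fixed point is inductive, and this is what blocks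
the reduction: `C^ω` has no redex at any position, so it only reduces to itself; and since no
rule creates a root `C`, every `→∞`-predecessor of `C(t)` has the form `C(s)` with `s →∞* t`,
whence, by a bisimulation, `C^ω` is its own only predecessor. So the conversion class of `C^ω`
under `→∞` is `{C^ω}`.
-/

theorem Tm.eq_of_le_liftRel {B : TRel Sg X} (hB : B ≤ liftRel B) {s t : Tm Sg X}
    (h : B s t) : s = t := by
  refine PFunctor.M.bisim (fun s t => s = t ∨ B s t) ?_ s t (Or.inr h)
  rintro u v (rfl | huv)
  · exact ⟨_, _, _, rfl, rfl, fun _ => Or.inl rfl⟩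
  · rcases hB u v huv with rfl | ⟨f, ss, ts, rfl, rfl, hi⟩
    · exact ⟨_, _, _, rfl, rfl, fun _ => Or.inl rfl⟩
    · exact ⟨Sum.inr f, ss, ts, rfl, rfl, fun i => Or.inr (hi i)⟩

theorem ired_eq_comp (R : TRS Sg X) :
    ired R = relComp
      (ReflTransGen (fun s t => RootStep R s t ∨ liftRel (ired R) s t)) (liftRel (ired R)) := by
  have hlfp : OrderHom.gfp (iredInnerHom R (ired R)) = ired R := OrderHom.map_lfp (iredHom R)
  conv_lhs => rw [← hlfp, ← OrderHom.map_gfp, hlfp]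
  rfl

theorem ired_eq_of_mem {R : TRS Sg X} {S : Set (Tm Sg X)}
    (hsub : ∀ f ss, Tm.node f ss ∈ S → ∀ i, ss i ∈ S)
    (hroot : ∀ s ∈ S, ∀ t, ¬ RootStep R s t) {s t : Tm Sg X} (hs : s ∈ S)
    (h : ired R s t) : s = t := by
  let P : TRel Sg X := fun s t => s ∈ S → s = t
  suffices iredHom R P ≤ P from OrderHom.lfp_le _ this s t h hs
  have star : ∀ {u b}, u ∈ S →
      ReflTransGen (fun s t => RootStep R s t ∨ liftRel P s t) u b → b = u := by
    intro u b hu hub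
    induction hub with
    | refl => rfl
    | tail _ hstep ih =>
      subst ih
      rcases hstep with hr | rfl | ⟨f, ss, ts, rfl, rfl, hi⟩
      · exact absurd hr (hroot _ hu _)
      · rfl
      · exact congrArg _ (funext fun i => (hi i (hsub f ss hu i)).symm)
  intro s v hsv hs
  let G := OrderHom.gfp (iredInnerHom R P)
  have hG : iredInnerHom R P G = G := OrderHom.map_gfp _
  refine Tm.eq_of_le_liftRel (B := fun u w => u ∈ S ∧ G u w) ?_ ⟨hs, hsv⟩
  rintro u w ⟨hu, huw⟩
  rw [← hG] at huw
  obtain ⟨b, hub, hbw⟩ := huw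
  obtain rfl := star hu hub
  rcases hbw with rfl | ⟨f, ss, ts, rfl, rfl, hi⟩
  · exact Or.inl rfl
  · exact Or.inr ⟨f, ss, ts, rfl, rfl, fun i => ⟨hsub f ss hu i, hi i⟩⟩

theorem subst_node (σ : X → Tm Sg X) (f : Sg.Sym) (args : Fin (Sg.ar f) → Tm Sg X) :
    subst σ (Tm.node f args) = Tm.node f (fun i => subst σ (args i)) := by
  conv_lhs => rw [← PFunctor.M.mk_dest (subst σ (Tm.node f args))]
  unfold subst
  rw [PFunctor.M.dest_corec]
  rfl

theorem subst_tmA (σ : ℕ → Tm SgCA ℕ) : subst σ tmA = tmA :=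
  (subst_node σ SymCA.a Fin.elim0).trans (congrArg _ (funext fun i => i.elim0))

theorem subst_tmC (σ : ℕ → Tm SgCA ℕ) (t : Tm SgCA ℕ) : subst σ (tmC t) = tmC (subst σ t) :=
  subst_node σ SymCA.C _

theorem rootStep_RCA_iff {s t : Tm SgCA ℕ} : RootStep RCA s t ↔ s = tmC tmA ∧ t = tmA := by
  constructor
  · rintro ⟨l, r, hlr, σ, rfl, rfl⟩
    obtain ⟨rfl, rfl⟩ := Prod.mk.inj (Set.mem_singleton_iff.mp hlr)
    exact ⟨by rw [subst_tmC, subst_tmA], subst_tmA σ⟩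
  · rintro ⟨rfl, rfl⟩
    exact ⟨tmC tmA, tmA, rfl, Tm.var, by rw [subst_tmC, subst_tmA], (subst_tmA _).symm⟩

theorem tmC_ne_tmA (t : Tm SgCA ℕ) : tmC t ≠ tmA := fun h => nomatch node_inj_sym h

theorem node_eq_tmC_iff {f : SymCA} {ss : Fin (SgCA.ar f) → Tm SgCA ℕ} {t : Tm SgCA ℕ} :
    Tm.node f ss = tmC t ↔ f = SymCA.C ∧ ∀ i, ss i = t := by
  constructor
  · intro h
    obtain rfl := node_inj_sym h
    exact ⟨rfl, fun i => congrFun (node_inj_args h) i⟩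
  · rintro ⟨rfl, hss⟩
    exact congrArg _ (funext hss)

theorem tmC_injective : Function.Injective tmC := fun _ _ h =>
  (node_eq_tmC_iff.mp h).2 ⟨0, Nat.one_pos⟩

theorem liftRel_tmC_right {Q : TRel SgCA ℕ} {x t : Tm SgCA ℕ} (h : liftRel Q x (tmC t)) :
    ∃ s, x = tmC s ∧ ReflGen Q s t := by
  rcases h with rfl | ⟨f, ss, ts, rfl, hts, hi⟩
  · exact ⟨t, rfl, ReflGen.refl⟩
  · obtain ⟨rfl, hts⟩ := node_eq_tmC_iff.mp hts.symm
    let i₀ : Fin (SgCA.ar SymCA.C) := ⟨0, Nat.one_pos⟩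
    refine ⟨ss i₀, node_eq_tmC_iff.mpr ⟨rfl, fun i => ?_⟩, ReflGen.single (hts i₀ ▸ hi i₀)⟩
    exact congrArg ss (Subsingleton.elim (α := Fin 1) i i₀)

-- The only right-hand side `a` has root `a`, so rewriting never creates a root `C`.
theorem ired_tmC_right {u t : Tm SgCA ℕ} (h : ired RCA u (tmC t)) :
    ∃ s, u = tmC s ∧ ReflTransGen (ired RCA) s t := by
  rw [ired_eq_comp] at h
  obtain ⟨b, hub, hbt⟩ := h
  obtain ⟨s, rfl, hst⟩ := liftRel_tmC_right hbt
  clear hbt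
  induction hub using ReflTransGen.head_induction_on with
  | refl => exact ⟨s, rfl, hst.to_reflTransGen⟩
  | head hxy _ ih =>
    obtain ⟨s', rfl, hs't⟩ := ih
    rcases hxy with hroot | hlift
    · exact absurd (rootStep_RCA_iff.mp hroot).2 (tmC_ne_tmA s')
    · obtain ⟨s'', rfl, hs''⟩ := liftRel_tmC_right hlift
      exact ⟨s'', rfl, hs''.to_reflTransGen.trans hs't⟩

theorem reflTransGen_ired_tmC_right {u t : Tm SgCA ℕ}
    (h : ReflTransGen (ired RCA) u (tmC t)) :
    ∃ s, u = tmC s ∧ ReflTransGen (ired RCA) s t := by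
  induction h using ReflTransGen.head_induction_on with
  | refl => exact ⟨t, rfl, ReflTransGen.refl⟩
  | head huv _ ih =>
    obtain ⟨s, rfl, hst⟩ := ih
    obtain ⟨s', rfl, hs's⟩ := ired_tmC_right huv
    exact ⟨s', rfl, hs's.trans hst⟩

section Comega

variable {Cω : Tm SgCA ℕ}

theorem cω_ne_tmA (hCω : Cω = tmC Cω) : Cω ≠ tmA := fun h => tmC_ne_tmA Cω (hCω.symm.trans h)

theorem eq_cω_of_reflTransGen_ired (hCω : Cω = tmC Cω) {u : Tm SgCA ℕ}
    (h : ReflTransGen (ired RCA) u Cω) : u = Cω := by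
  refine Tm.eq_of_le_liftRel (B := fun u w => w = Cω ∧ ReflTransGen (ired RCA) u Cω) ?_ ⟨rfl, h⟩
  rintro u w ⟨rfl, huw⟩
  rw [hCω] at huw
  obtain ⟨s, rfl, hs⟩ := reflTransGen_ired_tmC_right huw
  exact Or.inr ⟨SymCA.C, fun _ => s, fun _ => w, rfl, hCω, fun _ => ⟨rfl, hs⟩⟩

theorem cω_eq_of_ired (hCω : Cω = tmC Cω) {t : Tm SgCA ℕ} (h : ired RCA Cω t) :
    Cω = t := by
  refine ired_eq_of_mem (S := {Cω}) ?_ ?_ rfl h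
  · intro f ss hss
    exact (node_eq_tmC_iff.mp (hss.trans hCω)).2
  · intro s hs t hst
    rw [Set.mem_singleton_iff.mp hs] at hst
    exact cω_ne_tmA hCω (tmC_injective (hCω.symm.trans (rootStep_RCA_iff.mp hst).1))

theorem eq_cω_of_reflTransGen_ired_conv (hCω : Cω = tmC Cω) {z : Tm SgCA ℕ}
    (h : ReflTransGen (fun s t => ired RCA t s ∨ ired RCA s t) Cω z) : z = Cω := by
  induction h with
  | refl => rfl
  | tail _ hyz ih =>
    subst ih
    rcases hyz with h | h
    · exact eq_cω_of_reflTransGen_ired hCω (.single h)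
    · exact (cω_eq_of_ired hCω h).symm

theorem bired_cω_tmA (hCω : Cω = tmC Cω) : bired RCA Cω tmA := by
  refine OrderHom.le_gfp (biHom RCA) (a := fun s t => s = Cω ∧ t = tmA) ?_ Cω tmA ⟨rfl, rfl⟩
  rintro s t ⟨hs, rfl⟩
  have hlift : liftRel (fun s t => s = Cω ∧ t = tmA) s (tmC tmA) :=
    Or.inr ⟨SymCA.C, fun _ => Cω, fun _ => tmA, hs.trans hCω, rfl, fun _ => ⟨rfl, rfl⟩⟩
  exact .head (Or.inr hlift) (.single (Or.inl (rootStep_RCA_iff.mpr ⟨rfl, rfl⟩)))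

end Comega

/-- For the TRS `{C(a) → a}` and the unique term `C^ω` with `C^ω = C(C^ω)`:
`C^ω ∞→ a` holds, but neither `C^ω →∞ a` nor `C^ω ((→∞)⁻¹ ∪ →∞)* a`; hence the
inclusions `→∞ ⊆ ∞→` and `((→∞)⁻¹ ∪ →∞)* ⊆ ((∞→)⁻¹ ∪ ∞→)*` are strict for this TRS. -/
theorem bired_strict_example (Cω : Tm SgCA ℕ) (hCω : Cω = tmC Cω) :
    bired RCA Cω tmA ∧
    ¬ ired RCA Cω tmA ∧
    ¬ Relation.ReflTransGen (fun s t => ired RCA t s ∨ ired RCA s t) Cω tmA ∧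
    Relation.ReflTransGen (fun s t => bired RCA t s ∨ bired RCA s t) Cω tmA := by
  have hbired : bired RCA Cω tmA := bired_cω_tmA hCω
  have hconv : ¬ ReflTransGen (fun s t => ired RCA t s ∨ ired RCA s t) Cω tmA :=
    fun h => cω_ne_tmA hCω (eq_cω_of_reflTransGen_ired_conv hCω h).symm
  exact ⟨hbired, fun h => hconv (.single (Or.inr h)), hconv, .single (Or.inr hbired)⟩
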